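/- arXiv:1205.3717 — 5 statements merged into one kernel-verified Lean document; each statement's English description precedes it below -/
import Mathlib

section
/- If G is a countable graph with the extension property and v is a vertex of G, then the induced subgraph on the neighbourhood of v satisfies the extension property. -/
def ExtProp {V : Type*} (G : SimpleGraph V) : Prop :=
  ∀ A B : Finset V, Disjoint A B →
    ∃ v, v ∉ A ∧ v ∉ B ∧ (∀ a ∈ A, G.Adj v a) ∧ ∀ b ∈ B, ¬ G.Adj v b

def switch {V : Type*} (G : SimpleGraph V) (X : Set V) : SimpleGraph V where
  Adj u v := u ≠ v ∧ (G.Adj u v ↔ ((u ∈ X) ↔ (v ∈ X)))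
  symm := by
    constructor
    intro u v h
    refine ⟨h.1.symm, ?_⟩
    rw [G.adj_comm]
    tauto
  loopless := by constructor; intro v h; exact h.1 rfl

namespace SimpleGraph

variable {V : Type*} (G : SimpleGraph V)

/-- Excluding `N` itself is essential: otherwise `A = {n}` with `n ∈ N` would have no witness. -/
def extensionSet (P N : Finset V) : Set V :=
  {w | (∀ p ∈ P, G.Adj w p) ∧ ∀ n ∈ N, w ≠ n ∧ ¬ G.Adj w n}

variable {G}

/-- A witness for `(P ∪ A, N ∪ B)` in `G` is a witness for `(A, B)` in the induced graph. -/
theorem extProp_induce_extensionSet (h : ExtProp G) {P N : Finset V} (hPN : Disjoint P N) :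
    ExtProp (G.induce (G.extensionSet P N)) := by
  classical
  intro A B hAB
  set ι := Function.Embedding.subtype (· ∈ G.extensionSet P N)
  have hPB : Disjoint P (B.map ι) := by
    refine Finset.disjoint_left.mpr fun p hp hpB => ?_
    obtain ⟨b, -, rfl⟩ := Finset.mem_map.mp hpB
    exact G.irrefl (b.2.1 _ hp)
  have hAN : Disjoint (A.map ι) N := by
    refine Finset.disjoint_left.mpr fun n hnA hn => ?_
    obtain ⟨a, -, rfl⟩ := Finset.mem_map.mp hnA
    exact (a.2.2 _ hn).1 rfl
  obtain ⟨w, hwA, hwB, hadj, hnadj⟩ := h (P ∪ A.map ι) (N ∪ B.map ι) <|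
    Finset.disjoint_union_left.mpr ⟨Finset.disjoint_union_right.mpr ⟨hPN, hPB⟩,
      Finset.disjoint_union_right.mpr ⟨hAN, (Finset.disjoint_map ι).mpr hAB⟩⟩
  simp only [Finset.mem_union, not_or, Finset.mem_map] at hwA hwB
  have hw : w ∈ G.extensionSet P N := by
    refine ⟨fun p hp => hadj p (by simp [hp]), fun n hn => ⟨?_, hnadj n (by simp [hn])⟩⟩
    rintro rfl
    exact hwB.1 hn
  refine ⟨⟨w, hw⟩, fun hmem => hwA.2 ⟨_, hmem, rfl⟩, fun hmem => hwB.2 ⟨_, hmem, rfl⟩,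
    fun a ha => hadj a (by simp [ha, ι]), fun b hb => hnadj b (by simp [hb, ι])⟩

theorem extensionSet_singleton_empty (v : V) : G.extensionSet {v} ∅ = G.neighborSet v := by
  ext w
  simp [extensionSet, G.adj_comm]

end SimpleGraph

theorem extProp_neighborSet_general {V : Type*}
    (G : SimpleGraph V) (h : ExtProp G) (v : V) :
    ExtProp (G.induce (G.neighborSet v)) := by
  rw [← G.extensionSet_singleton_empty v]
  exact SimpleGraph.extProp_induce_extensionSet h (Finset.disjoint_empty_right _)

theorem extProp_neighborSet {V : Type*} [Countable V]
    (G : SimpleGraph V) (h : ExtProp G) (v : V) :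
    ExtProp (G.induce (G.neighborSet v)) :=
  extProp_neighborSet_general G h v
end

section
/- Let R be a countable graph with the extension property, and let X be an arbitrary set of vertices. Then there is a finite set S of vertices such that the graph σ_X(R) restricted to the complement of S satisfies the extension property (i.e., induces a copy of the Rado graph). -/
namespace SimpleGraph

variable {V : Type*}

def ExtPropIn (G : SimpleGraph V) (Y : Set V) : Prop :=
  ∀ A B : Finset V, Disjoint A B →
    ∃ v ∈ Y, v ∉ A ∧ v ∉ B ∧ (∀ a ∈ A, G.Adj v a) ∧ ∀ b ∈ B, ¬ G.Adj v b

theorem switch_compl (G : SimpleGraph V) (X : Set V) : switch G Xᶜ = switch G X := by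
  ext u v
  simp only [switch, Set.mem_compl_iff, not_iff_not]

theorem induce_switch (G : SimpleGraph V) (X s : Set V) :
    (switch G X).induce s = switch (G.induce s) (Subtype.val ⁻¹' X) := by
  ext u v
  simp [switch, Subtype.ext_iff]

theorem extProp_switch_of_extPropIn {G : SimpleGraph V} {X : Set V} (h : G.ExtPropIn X) :
    ExtProp (switch G X) := by
  classical
  intro A B hAB
  set A' := A.filter (· ∈ X) ∪ B.filter (· ∉ X)
  set B' := A.filter (· ∉ X) ∪ B.filter (· ∈ X)
  have hA'B' : Disjoint A' B' := by
    simp only [A', B', Finset.disjoint_left, Finset.mem_union, Finset.mem_filter]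
    intro x hx hx'
    have := Finset.disjoint_left.mp hAB
    grind
  obtain ⟨v, hvX, hvA', hvB', hadj, hnadj⟩ := h A' B' hA'B'
  have hvAB : v ∉ A ∧ v ∉ B := by
    simp only [A', B', Finset.mem_union, Finset.mem_filter] at hvA' hvB'
    tauto
  refine ⟨v, hvAB.1, hvAB.2, fun a ha => ⟨fun hva => hvAB.1 (hva ▸ ha), ?_⟩,
    fun b hb hvb => ?_⟩
  · by_cases haX : a ∈ X
    · exact iff_of_true (hadj a (by simp [A', ha, haX])) (iff_of_true hvX haX)
    · exact iff_of_false (hnadj a (by simp [B', ha, haX])) (by tauto)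
  · by_cases hbX : b ∈ X
    · exact hnadj b (by simp [B', hb, hbX]) (hvb.2.mpr (iff_of_true hvX hbX))
    · exact hbX ((hvb.2.mp (hadj b (by simp [A', hb, hbX]))).mp hvX)

theorem extPropIn_induce_compl_of_extensions [DecidableEq V] {G : SimpleGraph V}
    {C D : Finset V} (hCD : Disjoint C D) (Y : Set V)
    (h : ∀ A B : Finset V, Disjoint A B → C ⊆ A → D ⊆ B →
      ∃ v ∈ Y, v ∉ A ∧ v ∉ B ∧ (∀ a ∈ A, G.Adj v a) ∧ ∀ b ∈ B, ¬ G.Adj v b) :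
    (G.induce (↑(C ∪ D))ᶜ).ExtPropIn (Subtype.val ⁻¹' Y) := by
  intro A B hAB
  set ι := Function.Embedding.subtype (· ∈ (↑(C ∪ D) : Set V)ᶜ)
  have hout (x : ↥((↑(C ∪ D) : Set V)ᶜ)) : ι x ∉ C ∧ ι x ∉ D := by
    simpa [ι] using x.2
  have hC : Disjoint C (B.map ι) := by
    simp only [Finset.disjoint_left, Finset.mem_map]
    rintro _ hc ⟨b, -, rfl⟩
    exact (hout b).1 hc
  have hD : Disjoint (A.map ι) D := by
    simp only [Finset.disjoint_left, Finset.mem_map]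
    rintro _ ⟨a, -, rfl⟩ hd
    exact (hout a).2 hd
  obtain ⟨v, hvY, hvA, hvB, hadj, hnadj⟩ := h (C ∪ A.map ι) (D ∪ B.map ι)
    (Finset.disjoint_union_left.mpr ⟨Finset.disjoint_union_right.mpr ⟨hCD, hC⟩,
      Finset.disjoint_union_right.mpr ⟨hD, (Finset.disjoint_map ι).mpr hAB⟩⟩)
    Finset.subset_union_left Finset.subset_union_left
  have hv : v ∈ (↑(C ∪ D) : Set V)ᶜ := by
    simp only [Finset.mem_union, not_or] at hvA hvB
    simp [hvA.1, hvB.1]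
  have mem_map {s : Finset ↥((↑(C ∪ D) : Set V)ᶜ)} {x} (hx : x ∈ s) :
      ι x ∈ s.map ι := Finset.mem_map_of_mem ι hx
  exact ⟨⟨v, hv⟩, hvY, fun ha => hvA (Finset.mem_union_right _ (mem_map ha)),
    fun hb => hvB (Finset.mem_union_right _ (mem_map hb)),
    fun a ha => hadj a (Finset.mem_union_right _ (mem_map ha)),
    fun b hb => hnadj b (Finset.mem_union_right _ (mem_map hb))⟩

end SimpleGraph

open SimpleGraph in
theorem switch_cofinite_copy_general {V : Type*}
    (R : SimpleGraph V) (hR : ExtProp R) (X : Set V) :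
    ∃ S : Finset V, ExtProp ((switch R X).induce ((↑S : Set V)ᶜ)) := by
  classical
  by_cases hX : R.ExtPropIn X
  · refine ⟨∅ ∪ ∅, ?_⟩
    rw [induce_switch]
    exact extProp_switch_of_extPropIn <| extPropIn_induce_compl_of_extensions
      (Finset.disjoint_empty_left ∅) X fun A B hAB _ _ => hX A B hAB
  · obtain ⟨C, D, hCD, hno⟩ : ∃ C D : Finset V, Disjoint C D ∧ ∀ v ∈ X, v ∉ C → v ∉ D →
        (∀ c ∈ C, R.Adj v c) → ∃ d ∈ D, R.Adj v d := by
      simpa [ExtPropIn] using hX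
    refine ⟨C ∪ D, ?_⟩
    rw [induce_switch, ← switch_compl]
    refine extProp_switch_of_extPropIn <| extPropIn_induce_compl_of_extensions hCD Xᶜ ?_
    intro A B hAB hCA hDB
    obtain ⟨v, hvA, hvB, hadj, hnadj⟩ := hR A B hAB
    refine ⟨v, fun hvX => ?_, hvA, hvB, hadj, hnadj⟩
    obtain ⟨d, hd, hvd⟩ := hno v hvX (fun h => hvA (hCA h)) (fun h => hvB (hDB h))
      fun c hc => hadj c (hCA hc)
    exact hnadj d (hDB hd) hvd

theorem switch_cofinite_copy {V : Type*} [Countable V]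
    (R : SimpleGraph V) (hR : ExtProp R) (X : Set V) :
    ∃ S : Finset V, ExtProp ((switch R X).induce ((↑S : Set V)ᶜ)) :=
  switch_cofinite_copy_general R hR X
end

section
/- Let R be the Rado graph and g a permutation of its vertices changing only finitely many adjacencies at each vertex (g ∈ Aut₂(R)). Then for every vertex v, the image g(R(v)) of the neighbourhood of v belongs to the neighbourhood filter F_R, i.e., g(R(v)) contains a finite intersection of vertex neighbourhoods. -/
namespace SimpleGraph

variable {V W : Type*}

theorem biInter_insert_neighborSet_subset_diff [DecidableEq V] (G : SimpleGraph V) (x : V)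
    (F : Finset V) : ⋂ t ∈ insert x F, G.neighborSet t ⊆ G.neighborSet x \ F := by
  intro u hu
  simp only [Set.mem_iInter, Finset.mem_insert, mem_neighborSet] at hu
  exact ⟨hu x (Or.inl rfl), fun huF => G.irrefl (hu u (Or.inr huF))⟩

theorem neighborSet_apply_diff_image_subset (G : SimpleGraph V) (H : SimpleGraph W) (g : V ≃ W)
    (v : V) :
    H.neighborSet (g v) \ g '' {w | ¬ (G.Adj v w ↔ H.Adj (g v) (g w))} ⊆
      g '' G.neighborSet v := by
  rintro u ⟨hadj, hu⟩
  refine ⟨g.symm u, ?_, g.apply_symm_apply u⟩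
  have hagree : G.Adj v (g.symm u) ↔ H.Adj (g v) (g (g.symm u)) :=
    not_not.mp fun hS => hu ⟨g.symm u, hS, g.apply_symm_apply u⟩
  exact hagree.mpr (by rwa [g.apply_symm_apply])

end SimpleGraph

open SimpleGraph in
theorem aut2_preserves_nbhd_filter_general {V : Type*}
    (R : SimpleGraph V) (g : Equiv.Perm V)
    (hg : ∀ v : V, {w : V | ¬ (R.Adj v w ↔ R.Adj (g v) (g w))}.Finite) (v : V) :
    ∃ T : Finset V, (⋂ t ∈ T, R.neighborSet t) ⊆ ⇑g '' R.neighborSet v := by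
  classical
  set S := {w : V | ¬ (R.Adj v w ↔ R.Adj (g v) (g w))}
  have hS : S.Finite := hg v
  refine ⟨insert (g v) (hS.toFinset.image g), ?_⟩
  calc ⋂ t ∈ insert (g v) (hS.toFinset.image g), R.neighborSet t
      ⊆ R.neighborSet (g v) \ ↑(hS.toFinset.image g) :=
        biInter_insert_neighborSet_subset_diff R (g v) _
    _ = R.neighborSet (g v) \ g '' S := by simp
    _ ⊆ g '' R.neighborSet v := neighborSet_apply_diff_image_subset R R g v

theorem aut2_preserves_nbhd_filter {V : Type*} [Countable V]
    (R : SimpleGraph V) (hR : ExtProp R) (g : Equiv.Perm V)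
    (hg : ∀ v : V, {w : V | ¬ (R.Adj v w ↔ R.Adj (g v) (g w))}.Finite) (v : V) :
    ∃ T : Finset V, (⋂ t ∈ T, R.neighborSet t) ⊆ ⇑g '' R.neighborSet v :=
  aut2_preserves_nbhd_filter_general R g hg v
end

section
/- Every nonidentity finitary permutation g of the vertices of the Rado graph R changes infinitely many adjacencies at some vertex; specifically, if g moves a vertex v, then {w : adjacency of v and w is changed by g} is infinite. Consequently FSym(R) ∩ Aut₂(R) = 1. -/
/-!
By the extension property, for `v ≠ g v` infinitely many vertices are adjacent to `v` but not to
`g v`. All but finitely many of them are fixed by the finitary permutation `g`, and at each such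
fixed vertex `w` the adjacency `v ~ w` becomes the non-adjacency `g v ≁ g w = w`.
-/

namespace ExtProp

variable {V : Type*} {G : SimpleGraph V}

theorem infinite_setOf_adj_and_not_adj (hG : ExtProp G) {x y : V} (hxy : x ≠ y) :
    {u | G.Adj x u ∧ ¬ G.Adj y u}.Infinite := by
  classical
  intro hfin
  have hdisj : Disjoint {x} (insert y hfin.toFinset) := by
    simp [hxy]
  obtain ⟨u, -, hu, hux, huy⟩ := hG {x} (insert y hfin.toFinset) hdisj
  refine hu (Finset.mem_insert_of_mem (hfin.mem_toFinset.mpr ⟨?_, ?_⟩))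
  · exact (hux x (Finset.mem_singleton_self x)).symm
  · exact fun hyu => huy y (Finset.mem_insert_self y _) hyu.symm

theorem infinite_setOf_adj_changed (hG : ExtProp G) {g : Equiv.Perm V}
    (hg : {x | g x ≠ x}.Finite) {v : V} (hv : g v ≠ v) :
    {w | ¬ (G.Adj v w ↔ G.Adj (g v) (g w))}.Infinite := by
  refine ((hG.infinite_setOf_adj_and_not_adj hv.symm).sdiff hg).mono ?_
  rintro w ⟨⟨hvw, hgvw⟩, hw⟩
  have hgw : g w = w := not_not.mp hw
  rw [Set.mem_ofPred_eq, hgw]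
  exact fun hiff => hgvw (hiff.mp hvw)

end ExtProp

theorem finitary_changes_infinitely_general {V : Type*}
    (R : SimpleGraph V) (hR : ExtProp R) (g : Equiv.Perm V)
    (hfin : {x : V | g x ≠ x}.Finite) :
    (∀ v : V, g v ≠ v → {w : V | ¬ (R.Adj v w ↔ R.Adj (g v) (g w))}.Infinite) ∧
    ((∀ v : V, {w : V | ¬ (R.Adj v w ↔ R.Adj (g v) (g w))}.Finite) → g = 1) := by
  have changes := fun v (hv : g v ≠ v) => hR.infinite_setOf_adj_changed hfin hv
  refine ⟨changes, fun hfinite => Equiv.ext fun v => ?_⟩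
  by_contra hv
  exact changes v hv (hfinite v)

theorem finitary_changes_infinitely {V : Type*} [Countable V]
    (R : SimpleGraph V) (hR : ExtProp R) (g : Equiv.Perm V)
    (hfin : {x : V | g x ≠ x}.Finite) :
    (∀ v : V, g v ≠ v → {w : V | ¬ (R.Adj v w ↔ R.Adj (g v) (g w))}.Infinite) ∧
    ((∀ v : V, {w : V | ¬ (R.Adj v w ↔ R.Adj (g v) (g w))}.Finite) → g = 1) :=
  finitary_changes_infinitely_general R hR g hfin
end

section
/- Let R be the Rado graph and suppose g is a permutation of the vertices that is an isomorphism from R to σ_X(R) for some vertex set X with both X and its complement Y nonempty. If there exist vertices x, y with g x ∈ X and g y ∈ Y, then R(g x) ∩ g(R(x)) ⊆ X and R(g y) ∩ g(R(y)) ⊆ Y, hence R(g x) ∩ g(R(x)) ∩ R(g y) ∩ g(R(y)) = ∅. -/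
lemma mem_iff_mem_of_adj_of_switch_adj {V : Type*} {G : SimpleGraph V} {X : Set V} {u v : V}
    (h : G.Adj u v) (hs : (switch G X).Adj u v) : (u ∈ X ↔ v ∈ X) :=
  hs.2.mp h

section SwitchingIso

variable {V : Type*} {R : SimpleGraph V} {g : V → V} {X : Set V}

lemma mem_iff_mem_of_mem_neighborSet_inter_image
    (hg : ∀ u v : V, R.Adj u v → (switch R X).Adj (g u) (g v)) {v z : V}
    (hz : z ∈ R.neighborSet (g v) ∩ g '' R.neighborSet v) : (z ∈ X ↔ g v ∈ X) := by
  obtain ⟨hadj, w, hw, rfl⟩ := hz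
  exact (mem_iff_mem_of_adj_of_switch_adj hadj (hg v w hw)).symm

lemma neighborSet_inter_image_subset_of_mem
    (hg : ∀ u v : V, R.Adj u v → (switch R X).Adj (g u) (g v)) {v : V} (hv : g v ∈ X) :
    R.neighborSet (g v) ∩ g '' R.neighborSet v ⊆ X :=
  fun _ hz ↦ (mem_iff_mem_of_mem_neighborSet_inter_image hg hz).mpr hv

lemma neighborSet_inter_image_subset_compl_of_notMem
    (hg : ∀ u v : V, R.Adj u v → (switch R X).Adj (g u) (g v)) {v : V} (hv : g v ∉ X) :
    R.neighborSet (g v) ∩ g '' R.neighborSet v ⊆ Xᶜ :=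
  fun _ hz hzX ↦ hv ((mem_iff_mem_of_mem_neighborSet_inter_image hg hz).mp hzX)

end SwitchingIso

theorem switching_iso_disjoint_nbhds_general {V : Type*}
    (R : SimpleGraph V) (g : Equiv.Perm V) (X : Set V)
    (hiso : ∀ u v : V, R.Adj u v ↔ (switch R X).Adj (g u) (g v))
    (x y : V) (hx : g x ∈ X) (hy : g y ∈ Xᶜ) :
    R.neighborSet (g x) ∩ ⇑g '' R.neighborSet x ⊆ X ∧
    R.neighborSet (g y) ∩ ⇑g '' R.neighborSet y ⊆ Xᶜ ∧
    R.neighborSet (g x) ∩ ⇑g '' R.neighborSet x ∩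
      (R.neighborSet (g y) ∩ ⇑g '' R.neighborSet y) = ∅ := by
  have hg u v := (hiso u v).mp
  have hxX := neighborSet_inter_image_subset_of_mem hg hx
  have hyY := neighborSet_inter_image_subset_compl_of_notMem hg hy
  exact ⟨hxX, hyY, (disjoint_compl_right.mono hxX hyY).inter_eq⟩

theorem switching_iso_disjoint_nbhds {V : Type*} [Countable V]
    (R : SimpleGraph V) (hR : ExtProp R) (g : Equiv.Perm V) (X : Set V)
    (hX : X.Nonempty) (hY : Xᶜ.Nonempty)
    (hiso : ∀ u v : V, R.Adj u v ↔ (switch R X).Adj (g u) (g v))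
    (x y : V) (hx : g x ∈ X) (hy : g y ∈ Xᶜ) :
    R.neighborSet (g x) ∩ ⇑g '' R.neighborSet x ⊆ X ∧
    R.neighborSet (g y) ∩ ⇑g '' R.neighborSet y ⊆ Xᶜ ∧
    R.neighborSet (g x) ∩ ⇑g '' R.neighborSet x ∩
      (R.neighborSet (g y) ∩ ⇑g '' R.neighborSet y) = ∅ :=
  switching_iso_disjoint_nbhds_general R g X hiso x y hx hy
end
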